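/- Let A be a self-adjoint operator on a Hilbert space with A ≥ 0 (in the sense of quadratic forms), let u be a bounded self-adjoint operator, and let a < b < β be real numbers and δ > 0 such that A + (β - a)u ≥ δ. Then for every t ∈ [a,b], A + (t - a)u ≥ (1/C)(A + (t - a)·Id), where 1/C = min(1 - (b-a)/(β-a), δ/(β-a)). -/
import Mathlib


/-- Quadratic-form inequality `A + (t-a)u ≥ (1/C)(A + (t-a)·Id)` for `t ∈ [a,b]`,
where `qA` and `qu` are the quadratic forms of the self-adjoint operators `A` and `u`,
i.e. `qA ϕ = ⟨ϕ, Aϕ⟩`, `qu ϕ = ⟨ϕ, uϕ⟩`. -/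
theorem form_convex_combination_lower_bound
    {H : Type*} [NormedAddCommGroup H] [InnerProductSpace ℝ H]
    (qA qu : H → ℝ) (a b β δ : ℝ) (hab : a < b) (hbβ : b < β) (hδ : 0 < δ)
    (hA : ∀ ϕ : H, 0 ≤ qA ϕ)
    (hβ : ∀ ϕ : H, δ * ‖ϕ‖ ^ 2 ≤ qA ϕ + (β - a) * qu ϕ) :
    ∀ t ∈ Set.Icc a b, ∀ ϕ : H,
      min (1 - (b - a) / (β - a)) (δ / (β - a)) * (qA ϕ + (t - a) * ‖ϕ‖ ^ 2)
        ≤ qA ϕ + (t - a) * qu ϕ := by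
  intro t ht ϕ
  obtain ⟨ht1, ht2⟩ := ht
  have hβa : (0:ℝ) < β - a := by linarith
  set s : ℝ := (t - a) / (β - a) with hs
  set m : ℝ := min (1 - (b - a) / (β - a)) (δ / (β - a)) with hm
  have hsβ : s * (β - a) = t - a := div_mul_cancel₀ _ hβa.ne'
  have hs0 : 0 ≤ s := div_nonneg (by linarith) hβa.le
  have hs1 : s ≤ (b - a) / (β - a) := by
    rw [hs]
    gcongr ?_ / _
    linarith
  have h1 : m ≤ 1 - s := (min_le_left _ _).trans (by linarith)
  have h2 : m * (t - a) ≤ s * δ := by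
    have : m * (t - a) ≤ (δ / (β - a)) * (t - a) :=
      mul_le_mul_of_nonneg_right (min_le_right _ _) (by linarith)
    calc m * (t - a) ≤ (δ / (β - a)) * (t - a) := this
      _ = s * δ := by rw [hs]; ring
  have h3 : m * qA ϕ ≤ (1 - s) * qA ϕ := mul_le_mul_of_nonneg_right h1 (hA ϕ)
  have h4 : s * (δ * ‖ϕ‖ ^ 2) ≤ s * (qA ϕ + (β - a) * qu ϕ) :=
    mul_le_mul_of_nonneg_left (hβ ϕ) hs0
  have h5 : m * ((t - a) * ‖ϕ‖ ^ 2) ≤ s * δ * ‖ϕ‖ ^ 2 := by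
    have := mul_le_mul_of_nonneg_right h2 (sq_nonneg ‖ϕ‖)
    linarith [this]
  have h6 : s * (β - a) * qu ϕ = (t - a) * qu ϕ := by rw [hsβ]
  nlinarith [h3, h4, h5, h6]
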